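/- arXiv:2604.20807 — 6 statements merged into one kernel-verified Lean document; each statement's English description precedes it below -/
import Mathlib

section
/- Let M be a matching in a finite graph G with nonnegative edge weights w, and let π : V → ℝ be a feasible vertex potential (π(u) + π(v) ≥ w({u,v}) for every edge {u,v} ∈ G and π(v) ≥ 0 for all v). If every edge of M is tight (π(u) + π(v) = w({u,v}) for {u,v} ∈ M) and every vertex v with π(v) ≠ 0 is covered by M, then M is a maximum-weight matching of G, i.e. w(M) ≥ w(M') for every matching M' of G. -/
open Finset

/-!
LP duality for matchings. For a matching `N` the vertex sets of its edges are disjoint, so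
`∑ e ∈ N, ∑ v ∈ e, π v` is the total potential of the vertices `N` covers. Feasibility then
bounds the weight of any matching by the total potential `∑ v ∈ V, π v` (weak duality), and
the tightness of `M` together with complementary slackness (every vertex of non-zero potential
is covered by `M`) makes `M` attain this bound.
-/

/-- A finite graph is identified with its finite set of edges, each a 2-element vertex set. -/
def IsGraph {V : Type*} (G : Finset (Finset V)) : Prop := ∀ e ∈ G, e.card = 2

def IsMatching {V : Type*} (M : Finset (Finset V)) : Prop :=
  ∀ e ∈ M, ∀ f ∈ M, e ≠ f → Disjoint e f

section

variable {V β : Type*} [DecidableEq V]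

theorem IsMatching.sum_sum_eq_sum_biUnion [AddCommMonoid β] {N : Finset (Finset V)}
    (hN : IsMatching N) (f : V → β) :
    ∑ e ∈ N, ∑ v ∈ e, f v = ∑ v ∈ N.biUnion id, f v :=
  (sum_biUnion fun e he e' he' hne => hN e he e' he' hne).symm

theorem sum_le_sum_potential_of_isMatching {G N : Finset (Finset V)} {w : Finset V → ℝ}
    {π : V → ℝ} (hfeas_edge : ∀ e ∈ G, w e ≤ ∑ v ∈ e, π v)
    (hfeas_nonneg : ∀ v ∈ G.biUnion id, 0 ≤ π v) (hN : IsMatching N) (hNG : N ⊆ G) :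
    ∑ e ∈ N, w e ≤ ∑ v ∈ G.biUnion id, π v :=
  calc ∑ e ∈ N, w e ≤ ∑ e ∈ N, ∑ v ∈ e, π v := sum_le_sum fun e he => hfeas_edge e (hNG he)
    _ = ∑ v ∈ N.biUnion id, π v := hN.sum_sum_eq_sum_biUnion π
    _ ≤ ∑ v ∈ G.biUnion id, π v :=
      sum_le_sum_of_subset_of_nonneg (biUnion_subset_biUnion_of_subset_left id hNG)
        fun v hv _ => hfeas_nonneg v hv

theorem sum_eq_sum_potential_of_tight_of_covers {G M : Finset (Finset V)} {w : Finset V → ℝ}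
    {π : V → ℝ} (hM : IsMatching M) (hMG : M ⊆ G) (htight : ∀ e ∈ M, ∑ v ∈ e, π v = w e)
    (hcover : ∀ v ∈ G.biUnion id, π v ≠ 0 → ∃ e ∈ M, v ∈ e) :
    ∑ e ∈ M, w e = ∑ v ∈ G.biUnion id, π v :=
  calc ∑ e ∈ M, w e = ∑ e ∈ M, ∑ v ∈ e, π v := (sum_congr rfl htight).symm
    _ = ∑ v ∈ M.biUnion id, π v := hM.sum_sum_eq_sum_biUnion π
    _ = ∑ v ∈ G.biUnion id, π v := by
      refine sum_subset (biUnion_subset_biUnion_of_subset_left id hMG) fun v hv hvM => ?_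
      by_contra hne
      obtain ⟨e, he, hve⟩ := hcover v hv hne
      exact hvM (mem_biUnion.mpr ⟨e, he, hve⟩)

end

theorem max_weight_if_tight_matching_covers_nonzeros_general
    {V : Type*} [DecidableEq V]
    (G : Finset (Finset V)) (w : Finset V → ℝ)
    (M : Finset (Finset V)) (hM : IsMatching M) (hMG : M ⊆ G)
    (π : V → ℝ)
    (hfeas_edge : ∀ e ∈ G, w e ≤ ∑ v ∈ e, π v)
    (hfeas_nonneg : ∀ v ∈ G.biUnion id, 0 ≤ π v)
    (htight : ∀ e ∈ M, ∑ v ∈ e, π v = w e)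
    (hcover : ∀ v ∈ G.biUnion id, π v ≠ 0 → ∃ e ∈ M, v ∈ e) :
    ∀ M' : Finset (Finset V), IsMatching M' → M' ⊆ G →
      ∑ e ∈ M', w e ≤ ∑ e ∈ M, w e := fun _ hM' hM'G =>
  (sum_le_sum_potential_of_isMatching hfeas_edge hfeas_nonneg hM' hM'G).trans_eq
    (sum_eq_sum_potential_of_tight_of_covers hM hMG htight hcover).symm

/-- **Weight-maximality criterion.** If `M` is a matching in `G`, `π` is a feasible vertex
potential, every edge of `M` is tight, and every vertex of non-zero potential is matched,
then `M` is a maximum-weight matching of `G`. -/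
theorem max_weight_if_tight_matching_covers_nonzeros
    {V : Type*} [DecidableEq V]
    (G : Finset (Finset V)) (hG : IsGraph G) (w : Finset V → ℝ)
    (hw : ∀ e ∈ G, 0 ≤ w e)
    (M : Finset (Finset V)) (hM : IsMatching M) (hMG : M ⊆ G)
    (π : V → ℝ)
    (hfeas_edge : ∀ e ∈ G, w e ≤ ∑ v ∈ e, π v)
    (hfeas_nonneg : ∀ v ∈ G.biUnion id, 0 ≤ π v)
    (htight : ∀ e ∈ M, ∑ v ∈ e, π v = w e)
    (hcover : ∀ v ∈ G.biUnion id, π v ≠ 0 → ∃ e ∈ M, v ∈ e) :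
    ∀ M' : Finset (Finset V), IsMatching M' → M' ⊆ G →
      ∑ e ∈ M', w e ≤ ∑ e ∈ M, w e :=
  max_weight_if_tight_matching_covers_nonzeros_general G w M hM hMG π hfeas_edge hfeas_nonneg htight
    hcover
end

section
/- Let π be a feasible potential for a finite graph G with nonnegative weights w, let S ⊆ V contain no edge of G inside it, and let ε ≥ 0 satisfy ε ≤ w_π(e) for every edge e connecting S to V \ S \ Γ_π(S), and ε ≤ π(v) for every v ∈ S. Define π'(v) = π(v) − ε for v ∈ S, π'(v) = π(v) + ε for v ∈ Γ_π(S), and π'(v) = π(v) otherwise. Then π' is a feasible potential and Σ_v π'(v) = Σ_v π(v) + (|Γ_π(S)| − |S|)·ε. -/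
/-!
Every edge `{u, v}` keeps its feasibility: if neither endpoint is in `S` the potential only
grows; if `u ∈ S` then `v ∉ S`, and either `v ∈ Γ_π(S)`, so the changes `-ε` and `+ε` cancel,
or `v` is left alone and the edge's slack absorbs the loss `ε`. Nonnegativity on `S` is the
bound `ε ≤ π`, and since `S` and `Γ_π(S)` are disjoint the total changes by
`ε · |Γ_π(S)| - ε · |S|`.
-/

open Finset

open scoped Classical in
/-- `Γ_π(S)`: the vertices outside `S` joined to a vertex of `S` by a tight edge. -/
noncomputable def tightNbhd {V : Type*} [DecidableEq V]
    (G : Finset (Finset V)) (w : Finset V → ℝ) (π : V → ℝ) (S : Finset V) : Finset V :=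
  (G.biUnion id).filter
    (fun v => v ∉ S ∧ ∃ e ∈ G, v ∈ e ∧ (∑ x ∈ e, π x) = w e ∧ ∃ u ∈ e, u ∈ S)

lemma tightNbhd_subset {V : Type*} [DecidableEq V] (G : Finset (Finset V))
    (w : Finset V → ℝ) (π : V → ℝ) (S : Finset V) : tightNbhd G w π S ⊆ G.biUnion id :=
  filter_subset _ _

lemma disjoint_tightNbhd {V : Type*} [DecidableEq V] (G : Finset (Finset V))
    (w : Finset V → ℝ) (π : V → ℝ) (S : Finset V) : Disjoint S (tightNbhd G w π S) :=
  disjoint_right.mpr fun _ hv => (mem_filter.mp hv).2.1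

lemma card_inter_le_one_of_card_eq_two {V : Type*} [DecidableEq V] {e S : Finset V}
    (he : #e = 2) (hS : ¬ e ⊆ S) : #(e ∩ S) ≤ 1 := by
  have : e ∩ S ⊂ e := ssubset_of_subset_of_ne inter_subset_left fun h => hS (h ▸ inter_subset_right)
  have := card_lt_card this
  omega

section AdjustPotential

variable {V : Type*} [DecidableEq V] (S T : Finset V) (ε : ℝ) (π : V → ℝ)

def adjustPotential (v : V) : ℝ :=
  if v ∈ S then π v - ε else if v ∈ T then π v + ε else π v

variable {S T ε π}

lemma adjustPotential_eq_of_disjoint (hST : Disjoint S T) (v : V) :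
    adjustPotential S T ε π v = π v + (if v ∈ T then ε else 0) - (if v ∈ S then ε else 0) := by
  unfold adjustPotential
  by_cases hS : v ∈ S
  · simp [hS, disjoint_left.mp hST hS]
  · by_cases hT : v ∈ T <;> simp [hS, hT]

lemma sum_adjustPotential (hST : Disjoint S T) (U : Finset V) :
    ∑ v ∈ U, adjustPotential S T ε π v = ∑ v ∈ U, π v + (#(U ∩ T) - #(U ∩ S) : ℝ) * ε := by
  simp only [adjustPotential_eq_of_disjoint hST, sum_sub_distrib, sum_add_distrib, sum_ite_mem,
    sum_const, nsmul_eq_mul]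
  ring

lemma adjustPotential_nonneg (hε : 0 ≤ ε) {v : V} (hv : 0 ≤ π v) (hvS : v ∈ S → ε ≤ π v) :
    0 ≤ adjustPotential S T ε π v := by
  unfold adjustPotential
  split_ifs with hS
  · linarith [hvS hS]
  · linarith
  · exact hv

lemma le_sum_adjustPotential (hST : Disjoint S T) (hε : 0 ≤ ε) {e : Finset V} {c : ℝ}
    (heS : ¬ e ⊆ S) (heS₁ : #(e ∩ S) ≤ 1) (hfeas : c ≤ ∑ x ∈ e, π x)
    (hslack : (∃ u ∈ e, u ∈ S) → (∃ v ∈ e, v ∉ S ∧ v ∉ T) → ε ≤ ∑ x ∈ e, π x - c) :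
    c ≤ ∑ x ∈ e, adjustPotential S T ε π x := by
  rw [sum_adjustPotential hST]
  by_cases hcard : #(e ∩ S) ≤ #(e ∩ T)
  · have : (0 : ℝ) ≤ #(e ∩ T) - #(e ∩ S) := sub_nonneg.mpr (by exact_mod_cast hcard)
    linarith [mul_nonneg this hε]
  · have heT : e ∩ T = ∅ := card_eq_zero.mp (by omega)
    have heS_one : #(e ∩ S) = 1 := by omega
    obtain ⟨u, hu⟩ := card_pos.mp (by omega : 0 < #(e ∩ S))
    obtain ⟨hue, huS⟩ := mem_inter.mp hu
    obtain ⟨v, hv⟩ := sdiff_nonempty.mpr heS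
    obtain ⟨hve, hvS⟩ := mem_sdiff.mp hv
    have hvT : v ∉ T := fun hvT => notMem_empty v (heT ▸ mem_inter.mpr ⟨hve, hvT⟩)
    have := hslack ⟨u, hue, huS⟩ ⟨v, hve, hvS, hvT⟩
    rw [heT, heS_one, card_empty]
    push_cast
    linarith

end AdjustPotential

theorem primal_dual_adjustment_general
    {V : Type*} [DecidableEq V]
    (G : Finset (Finset V)) (hG : IsGraph G) (w : Finset V → ℝ)
    (π : V → ℝ)
    (hfeas_edge : ∀ e ∈ G, w e ≤ ∑ v ∈ e, π v)
    (hfeas_nonneg : ∀ v ∈ G.biUnion id, 0 ≤ π v)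
    (S : Finset V) (hSV : S ⊆ G.biUnion id)
    (hS_no_edge : ∀ e ∈ G, ¬ e ⊆ S)
    (ε : ℝ) (hε0 : 0 ≤ ε)
    (hε_slack : ∀ e ∈ G, (∃ u ∈ e, u ∈ S) →
      (∃ v ∈ e, v ∉ S ∧ v ∉ tightNbhd G w π S) →
      ε ≤ (∑ x ∈ e, π x) - w e)
    (hε_pot : ∀ v ∈ S, ε ≤ π v)
    (π' : V → ℝ)
    (hπ' : ∀ v, π' v =
      if v ∈ S then π v - ε else if v ∈ tightNbhd G w π S then π v + ε else π v) :
    (∀ e ∈ G, w e ≤ ∑ v ∈ e, π' v) ∧ (∀ v ∈ G.biUnion id, 0 ≤ π' v) ∧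
      ∑ v ∈ G.biUnion id, π' v =
        ∑ v ∈ G.biUnion id, π v + (((tightNbhd G w π S).card : ℝ) - S.card) * ε := by
  obtain rfl : π' = adjustPotential S (tightNbhd G w π S) ε π := funext hπ'
  have hST := disjoint_tightNbhd G w π S
  refine ⟨fun e he => ?_, fun v hv => ?_, ?_⟩
  · exact le_sum_adjustPotential hST hε0 (hS_no_edge e he)
      (card_inter_le_one_of_card_eq_two (hG e he) (hS_no_edge e he)) (hfeas_edge e he)
      (hε_slack e he)
  · exact adjustPotential_nonneg hε0 (hfeas_nonneg v hv) (hε_pot v)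
  · rw [sum_adjustPotential hST, inter_eq_right.mpr (tightNbhd_subset G w π S),
      inter_eq_right.mpr hSV]

/-- **Primal-dual adjustment.** Lowering the potential by `ε` on `S` and raising it by `ε`
on `Γ_π(S)` preserves feasibility, and changes the total potential by
`(|Γ_π(S)| − |S|)·ε`. -/
theorem primal_dual_adjustment
    {V : Type*} [DecidableEq V]
    (G : Finset (Finset V)) (hG : IsGraph G) (w : Finset V → ℝ)
    (hw : ∀ e ∈ G, 0 ≤ w e)
    (π : V → ℝ)
    (hfeas_edge : ∀ e ∈ G, w e ≤ ∑ v ∈ e, π v)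
    (hfeas_nonneg : ∀ v ∈ G.biUnion id, 0 ≤ π v)
    (S : Finset V) (hSV : S ⊆ G.biUnion id)
    (hS_no_edge : ∀ e ∈ G, ¬ e ⊆ S)
    (ε : ℝ) (hε0 : 0 ≤ ε)
    (hε_slack : ∀ e ∈ G, (∃ u ∈ e, u ∈ S) →
      (∃ v ∈ e, v ∉ S ∧ v ∉ tightNbhd G w π S) →
      ε ≤ (∑ x ∈ e, π x) - w e)
    (hε_pot : ∀ v ∈ S, ε ≤ π v)
    (π' : V → ℝ)
    (hπ' : ∀ v, π' v =
      if v ∈ S then π v - ε else if v ∈ tightNbhd G w π S then π v + ε else π v) :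
    (∀ e ∈ G, w e ≤ ∑ v ∈ e, π' v) ∧ (∀ v ∈ G.biUnion id, 0 ≤ π' v) ∧
      ∑ v ∈ G.biUnion id, π' v =
        ∑ v ∈ G.biUnion id, π v + (((tightNbhd G w π S).card : ℝ) - S.card) * ε :=
  primal_dual_adjustment_general G hG w π hfeas_edge hfeas_nonneg S hSV hS_no_edge ε hε0 hε_slack
    hε_pot π' hπ'
end

section
/- Let G be a finite bipartite graph with parts L and R, w : G → ℝ≥0, and π a feasible potential. If there is no matching M ⊆ G_π covering all vertices v with π(v) > 0, then there exists a set X of vertices with π(v) > 0 for all v ∈ X, with X ⊆ L or X ⊆ R, such that |X| > |Γ_π(X)|. -/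
open Finset

open scoped Classical in
/-- The subgraph `G_π` of tight edges. -/
noncomputable def tightSubgraph {V : Type*}
    (G : Finset (Finset V)) (w : Finset V → ℝ) (π : V → ℝ) : Finset (Finset V) :=
  G.filter (fun e => (∑ x ∈ e, π x) = w e)

lemma kernel_exists {V : Type*} [DecidableEq V] (U : Finset V) :
    ∀ (A dom : Finset V) (σ : V → V),
    dom ⊆ U → (∀ x ∈ dom, σ x ∈ U) →
    (∀ x ∈ dom, (x ∈ A ↔ σ x ∉ A)) →
    (∀ x ∈ dom, ∀ y ∈ dom, σ x = σ y → x = y) →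
    ∃ S ⊆ U, (∀ x ∈ S, x ∈ dom → σ x ∉ S) ∧
      (∀ y ∈ U, y ∉ S → ∃ x ∈ S, x ∈ dom ∧ σ x = y) := by
  induction U using Finset.strongInduction with
  | _ U ih =>
    intro A dom σ hdomU hσU hflip hinj
    by_cases hcase : ∀ y ∈ U, ∃ x ∈ dom, σ x = y
    · refine ⟨U.filter (· ∈ A), filter_subset _ _, ?_, ?_⟩
      · intro x hx hxdom hmem
        have hxA : x ∈ A := (mem_filter.mp hx).2
        have := (hflip x hxdom).mp hxA
        exact this (mem_filter.mp hmem).2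
      · intro y hyU hyS
        have hyA : y ∉ A := fun h => hyS (mem_filter.mpr ⟨hyU, h⟩)
        obtain ⟨x, hxdom, hσx⟩ := hcase y hyU
        have hxA : x ∈ A := by
          by_contra hxA
          exact hyA (not_not.mp (fun h => hxA ((hflip x hxdom).mpr (hσx ▸ h))))
        exact ⟨x, mem_filter.mpr ⟨hdomU hxdom, hxA⟩, hxdom, hσx⟩
    · push_neg at hcase
      obtain ⟨x, hxU, hx⟩ := hcase
      by_cases hxdom : x ∈ dom
      · -- remove x and σ x
        have hσxx : σ x ≠ x := by
          intro h
          have := hflip x hxdom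
          rw [h] at this
          tauto
        set U' := (U.erase x).erase (σ x) with hU'
        have hxU' : x ∉ U' := fun h => (notMem_erase x _) (mem_of_mem_erase h)
        have hσxU' : σ x ∉ U' := notMem_erase _ _
        have hssub : U' ⊂ U := by
          refine Finset.ssubset_iff_of_subset ?_ |>.mpr ⟨x, hxU, hxU'⟩
          exact (erase_subset _ _).trans (erase_subset _ _)
        set dom' := (dom ∩ U').filter (fun z => σ z ∈ U') with hdom'
        have hdom'sub : ∀ z ∈ dom', z ∈ dom ∧ z ∈ U' ∧ σ z ∈ U' := by
          intro z hz
          have := mem_filter.mp hz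
          exact ⟨(mem_inter.mp this.1).1, (mem_inter.mp this.1).2, this.2⟩
        obtain ⟨S', hS'U, hind, hdomin⟩ := ih U' hssub A dom' σ
          (fun z hz => (hdom'sub z hz).2.1)
          (fun z hz => (hdom'sub z hz).2.2)
          (fun z hz => hflip z (hdom'sub z hz).1)
          (fun z hz y hy => hinj z (hdom'sub z hz).1 y (hdom'sub y hy).1)
        have hmemdom' : ∀ z ∈ S', z ∈ dom → z ∈ dom' := by
          intro z hzS hzdom
          refine mem_filter.mpr ⟨mem_inter.mpr ⟨hzdom, hS'U hzS⟩, ?_⟩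
          have h1 : σ z ∈ U := hσU z hzdom
          have h2 : σ z ≠ x := hx z hzdom
          have h3 : σ z ≠ σ x := fun h => by
            have := hinj z hzdom x hxdom h
            exact hxU' (this ▸ hS'U hzS)
          exact mem_erase.mpr ⟨h3, mem_erase.mpr ⟨h2, h1⟩⟩
        refine ⟨insert x S', ?_, ?_, ?_⟩
        · intro y hy
          rcases mem_insert.mp hy with rfl | hy
          · exact hxU
          · exact ((erase_subset _ _).trans (erase_subset _ _)) (hS'U hy)
        · intro z hz hzdom hmem
          rcases mem_insert.mp hz with rfl | hzS
          · rcases mem_insert.mp hmem with h | h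
            · exact hσxx h
            · exact hσxU' (hS'U h)
          · have hz' := hmemdom' z hzS hzdom
            rcases mem_insert.mp hmem with h | h
            · exact hx z hzdom h
            · exact hind z hzS hz' h
        · intro y hyU hyS
          by_cases hyσx : y = σ x
          · exact ⟨x, mem_insert_self _ _, hxdom, hyσx.symm⟩
          · have hyx : y ≠ x := fun h => hyS (h ▸ mem_insert_self _ _)
            have hyU' : y ∈ U' := mem_erase.mpr ⟨hyσx, mem_erase.mpr ⟨hyx, hyU⟩⟩
            have hyS' : y ∉ S' := fun h => hyS (mem_insert_of_mem h)
            obtain ⟨z, hzS, hzdom', hσz⟩ := hdomin y hyU' hyS'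
            exact ⟨z, mem_insert_of_mem hzS, (hdom'sub z hzdom').1, hσz⟩
      · -- x has no out-arrow: remove only x
        set U' := U.erase x with hU'
        have hxU' : x ∉ U' := notMem_erase _ _
        have hssub : U' ⊂ U := erase_ssubset hxU
        set dom' := (dom ∩ U').filter (fun z => σ z ∈ U') with hdom'
        have hdom'sub : ∀ z ∈ dom', z ∈ dom ∧ z ∈ U' ∧ σ z ∈ U' := by
          intro z hz
          have := mem_filter.mp hz
          exact ⟨(mem_inter.mp this.1).1, (mem_inter.mp this.1).2, this.2⟩
        obtain ⟨S', hS'U, hind, hdomin⟩ := ih U' hssub A dom' σ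
          (fun z hz => (hdom'sub z hz).2.1)
          (fun z hz => (hdom'sub z hz).2.2)
          (fun z hz => hflip z (hdom'sub z hz).1)
          (fun z hz y hy => hinj z (hdom'sub z hz).1 y (hdom'sub y hy).1)
        have hmemdom' : ∀ z ∈ S', z ∈ dom → z ∈ dom' := by
          intro z hzS hzdom
          refine mem_filter.mpr ⟨mem_inter.mpr ⟨hzdom, hS'U hzS⟩, ?_⟩
          exact mem_erase.mpr ⟨hx z hzdom, hσU z hzdom⟩
        refine ⟨insert x S', ?_, ?_, ?_⟩
        · intro y hy
          rcases mem_insert.mp hy with rfl | hy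
          · exact hxU
          · exact (erase_subset _ _) (hS'U hy)
        · intro z hz hzdom hmem
          rcases mem_insert.mp hz with rfl | hzS
          · exact hxdom hzdom
          · have hz' := hmemdom' z hzS hzdom
            rcases mem_insert.mp hmem with h | h
            · exact hx z hzdom h
            · exact hind z hzS hz' h
        · intro y hyU hyS
          have hyx : y ≠ x := fun h => hyS (h ▸ mem_insert_self _ _)
          have hyU' : y ∈ U' := mem_erase.mpr ⟨hyx, hyU⟩
          have hyS' : y ∉ S' := fun h => hyS (mem_insert_of_mem h)
          obtain ⟨z, hzS, hzdom', hσz⟩ := hdomin y hyU' hyS'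
          exact ⟨z, mem_insert_of_mem hzS, (hdom'sub z hzdom').1, hσz⟩

/-- **Deficiency witness.** In a bipartite graph, if no matching inside the tight subgraph
covers all vertices of positive potential, then there is a set `X` of positive-potential
vertices inside one of the parts with `|X| > |Γ_π(X)|`. -/
theorem deficiency_witness
    {V : Type*} [DecidableEq V]
    (G : Finset (Finset V)) (hG : IsGraph G) (L R : Finset V)
    (hLR : Disjoint L R)
    (hbip : ∀ e ∈ G, ∃ u ∈ L, ∃ v ∈ R, e = {u, v})
    (w : Finset V → ℝ) (hw : ∀ e ∈ G, 0 ≤ w e)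
    (π : V → ℝ)
    (hfeas_edge : ∀ e ∈ G, w e ≤ ∑ v ∈ e, π v)
    (hfeas_nonneg : ∀ v ∈ G.biUnion id, 0 ≤ π v)
    (hno : ¬ ∃ M : Finset (Finset V), M ⊆ tightSubgraph G w π ∧ IsMatching M ∧
      ∀ v ∈ G.biUnion id, 0 < π v → ∃ e ∈ M, v ∈ e) :
    ∃ X : Finset V, (∀ v ∈ X, 0 < π v) ∧ (X ⊆ L ∨ X ⊆ R) ∧
      (tightNbhd G w π X).card < X.card := by
  classical
  by_contra hdef
  push_neg at hdef
  apply hno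
  set Vs := G.biUnion id with hVsdef
  set PL := Vs.filter (fun v => v ∈ L ∧ 0 < π v) with hPLdef
  set PR := Vs.filter (fun v => v ∈ R ∧ 0 < π v) with hPRdef
  have hPLL : PL ⊆ L := fun v hv => (mem_filter.mp hv).2.1
  have hPRR : PR ⊆ R := fun v hv => (mem_filter.mp hv).2.1
  have hne_LR : ∀ a ∈ L, ∀ b ∈ R, a ≠ b := fun a ha b hb h =>
    disjoint_left.mp hLR ha (h ▸ hb)
  have hPLR : Disjoint PL PR := hLR.mono hPLL hPRR
  set tL : V → Finset V :=
    fun u => R.filter (fun v => ({u, v} : Finset V) ∈ tightSubgraph G w π) with htLdef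
  set tR : V → Finset V :=
    fun v => L.filter (fun u => ({u, v} : Finset V) ∈ tightSubgraph G w π) with htRdef
  -- tight neighbourhood is contained in the Hall union, on each side
  have hkeyL : ∀ X ⊆ PL, tightNbhd G w π X ⊆ X.biUnion tL := by
    intro X hX v hv
    rw [tightNbhd, mem_filter] at hv
    obtain ⟨hvVs, hvX, e, heG, hve, htight, u, hue, huX⟩ := hv
    obtain ⟨a, haL, b, hbR, rfl⟩ := hbip e heG
    have huL : u ∈ L := hPLL (hX huX)
    have hua : u = a := by
      rcases mem_insert.mp hue with h | h
      · exact h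
      · exact absurd ((mem_singleton.mp h) ▸ huL) (fun hc => hne_LR u hc b hbR (mem_singleton.mp h))
    have hvb : v = b := by
      rcases mem_insert.mp hve with h | h
      · exact absurd (by rw [h, ← hua]; exact huX) hvX
      · exact mem_singleton.mp h
    refine mem_biUnion.mpr ⟨u, huX, ?_⟩
    refine mem_filter.mpr ⟨hvb ▸ hbR, ?_⟩
    rw [hua, hvb]
    exact mem_filter.mpr ⟨heG, htight⟩
  have hkeyR : ∀ X ⊆ PR, tightNbhd G w π X ⊆ X.biUnion tR := by
    intro X hX v hv
    rw [tightNbhd, mem_filter] at hv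
    obtain ⟨hvVs, hvX, e, heG, hve, htight, u, hue, huX⟩ := hv
    obtain ⟨a, haL, b, hbR, rfl⟩ := hbip e heG
    have huR : u ∈ R := hPRR (hX huX)
    have hub : u = b := by
      rcases mem_insert.mp hue with h | h
      · exact absurd h.symm (hne_LR a haL u (h ▸ huR))
      · exact mem_singleton.mp h
    have hva : v = a := by
      rcases mem_insert.mp hve with h | h
      · exact h
      · exact absurd (by rw [mem_singleton.mp h, ← hub]; exact huX) hvX
    refine mem_biUnion.mpr ⟨u, huX, ?_⟩
    refine mem_filter.mpr ⟨hva ▸ haL, ?_⟩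
    rw [hub, hva]
    exact mem_filter.mpr ⟨heG, htight⟩
  -- Hall's condition and Hall's theorem on each side
  have hallL : ∀ s : Finset {x // x ∈ PL}, s.card ≤ (s.biUnion (fun x => tL ↑x)).card := by
    intro s
    set X := s.image (fun x : {x // x ∈ PL} => (x : V)) with hXdef
    have hXPL : X ⊆ PL := by
      intro v hv; obtain ⟨x, _, rfl⟩ := mem_image.mp hv; exact x.2
    have h1 : s.card = X.card := (card_image_of_injective s Subtype.coe_injective).symm
    have h2 : X.card ≤ (tightNbhd G w π X).card :=
      hdef X (fun v hv => (mem_filter.mp (hXPL hv)).2.2)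
        (Or.inl (fun v hv => hPLL (hXPL hv)))
    have h3 : (tightNbhd G w π X).card ≤ (X.biUnion tL).card :=
      card_le_card (hkeyL X hXPL)
    have h4 : X.biUnion tL = s.biUnion (fun x => tL ↑x) := image_biUnion
    rw [h1, ← h4]
    exact h2.trans h3
  have hallR : ∀ s : Finset {x // x ∈ PR}, s.card ≤ (s.biUnion (fun x => tR ↑x)).card := by
    intro s
    set X := s.image (fun x : {x // x ∈ PR} => (x : V)) with hXdef
    have hXPR : X ⊆ PR := by
      intro v hv; obtain ⟨x, _, rfl⟩ := mem_image.mp hv; exact x.2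
    have h1 : s.card = X.card := (card_image_of_injective s Subtype.coe_injective).symm
    have h2 : X.card ≤ (tightNbhd G w π X).card :=
      hdef X (fun v hv => (mem_filter.mp (hXPR hv)).2.2)
        (Or.inr (fun v hv => hPRR (hXPR hv)))
    have h3 : (tightNbhd G w π X).card ≤ (X.biUnion tR).card :=
      card_le_card (hkeyR X hXPR)
    have h4 : X.biUnion tR = s.biUnion (fun x => tR ↑x) := image_biUnion
    rw [h1, ← h4]
    exact h2.trans h3
  obtain ⟨fL, hfLinj, hfLmem⟩ :=
    (Finset.all_card_le_biUnion_card_iff_existsInjective'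
      (fun x : {x // x ∈ PL} => tL ↑x)).mp hallL
  obtain ⟨gR, hgRinj, hgRmem⟩ :=
    (Finset.all_card_le_biUnion_card_iff_existsInjective'
      (fun x : {x // x ∈ PR} => tR ↑x)).mp hallR
  -- totalize
  set fh : V → V := fun v => if h : v ∈ PL then fL ⟨v, h⟩ else v with hfhdef
  set gh : V → V := fun v => if h : v ∈ PR then gR ⟨v, h⟩ else v with hghdef
  have hfhmem : ∀ u ∈ PL, fh u ∈ tL u := by
    intro u h
    have : fh u = fL ⟨u, h⟩ := dif_pos h
    rw [this]; exact hfLmem ⟨u, h⟩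
  have hghmem : ∀ v ∈ PR, gh v ∈ tR v := by
    intro v h
    have : gh v = gR ⟨v, h⟩ := dif_pos h
    rw [this]; exact hgRmem ⟨v, h⟩
  have hfhR : ∀ u ∈ PL, fh u ∈ R := fun u h => (mem_filter.mp (hfhmem u h)).1
  have hghL : ∀ v ∈ PR, gh v ∈ L := fun v h => (mem_filter.mp (hghmem v h)).1
  have hfhT : ∀ u ∈ PL, ({u, fh u} : Finset V) ∈ tightSubgraph G w π :=
    fun u h => (mem_filter.mp (hfhmem u h)).2
  have hghT : ∀ v ∈ PR, ({gh v, v} : Finset V) ∈ tightSubgraph G w π :=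
    fun v h => (mem_filter.mp (hghmem v h)).2
  have hfhinj : ∀ u ∈ PL, ∀ u' ∈ PL, fh u = fh u' → u = u' := by
    intro u h u' h' heq
    simp only [hfhdef] at heq
    rw [dif_pos h, dif_pos h'] at heq
    exact congrArg Subtype.val (hfLinj heq)
  have hghinj : ∀ v ∈ PR, ∀ v' ∈ PR, gh v = gh v' → v = v' := by
    intro v h v' h' heq
    simp only [hghdef] at heq
    rw [dif_pos h, dif_pos h'] at heq
    exact congrArg Subtype.val (hgRinj heq)
  -- kernel setup
  set U := PL ∪ PR with hUdef
  set dm := PL.filter (fun x => fh x ∈ PR) ∪ PR.filter (fun x => gh x ∈ PL) with hdmdef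
  set σ : V → V := fun x => if x ∈ PL then fh x else gh x with hσdef
  have hdmcase : ∀ x ∈ dm, (x ∈ PL ∧ σ x = fh x ∧ σ x ∈ PR) ∨
      (x ∈ PR ∧ σ x = gh x ∧ σ x ∈ PL) := by
    intro x hx
    rcases mem_union.mp hx with h | h
    · obtain ⟨h1, h2⟩ := mem_filter.mp h
      exact Or.inl ⟨h1, by simp only [hσdef, if_pos h1], by simp only [hσdef]; simpa [if_pos h1] using h2⟩
    · obtain ⟨h1, h2⟩ := mem_filter.mp h
      have hnPL : x ∉ PL := disjoint_right.mp hPLR h1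
      exact Or.inr ⟨h1, by simp only [hσdef, if_neg hnPL], by simp only [hσdef]; simpa [if_neg hnPL] using h2⟩
  have hdmU : dm ⊆ U := by
    intro x hx
    rcases hdmcase x hx with ⟨h, _, _⟩ | ⟨h, _, _⟩
    · exact mem_union_left _ h
    · exact mem_union_right _ h
  have hσU : ∀ x ∈ dm, σ x ∈ U := by
    intro x hx
    rcases hdmcase x hx with ⟨_, _, h⟩ | ⟨_, _, h⟩
    · exact mem_union_right _ h
    · exact mem_union_left _ h
  have hflip : ∀ x ∈ dm, (x ∈ PL ↔ σ x ∉ PL) := by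
    intro x hx
    rcases hdmcase x hx with ⟨h1, _, h3⟩ | ⟨h1, _, h3⟩
    · exact ⟨fun _ => disjoint_right.mp hPLR h3, fun _ => h1⟩
    · exact ⟨fun hc => absurd h1 (disjoint_left.mp hPLR hc), fun hc => absurd h3 hc⟩
  have hσinj : ∀ x ∈ dm, ∀ y ∈ dm, σ x = σ y → x = y := by
    intro x hx y hy heq
    rcases hdmcase x hx with ⟨hx1, hx2, hx3⟩ | ⟨hx1, hx2, hx3⟩ <;>
      rcases hdmcase y hy with ⟨hy1, hy2, hy3⟩ | ⟨hy1, hy2, hy3⟩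
    · exact hfhinj x hx1 y hy1 (by rw [← hx2, ← hy2, heq])
    · exact absurd (heq ▸ hx3) (disjoint_left.mp hPLR hy3)
    · exact absurd (heq ▸ hx3) (disjoint_right.mp hPLR hy3)
    · exact hghinj x hx1 y hy1 (by rw [← hx2, ← hy2, heq])
  obtain ⟨S, hSU, hSind, hSdom⟩ := kernel_exists U PL dm σ hdmU hσU hflip hσinj
  -- independence consequences
  have hkey1 : ∀ u ∈ S ∩ PL, ∀ v ∈ S ∩ PR, fh u ≠ v := by
    rintro u hu v hv rfl
    obtain ⟨huS, huPL⟩ := mem_inter.mp hu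
    obtain ⟨hvS, hvPR⟩ := mem_inter.mp hv
    have hudm : u ∈ dm := mem_union_left _ (mem_filter.mpr ⟨huPL, hvPR⟩)
    exact hSind u huS hudm (by rw [hσdef]; simpa [if_pos huPL] using hvS)
  have hkey2 : ∀ u ∈ S ∩ PL, ∀ v ∈ S ∩ PR, gh v ≠ u := by
    rintro u hu v hv rfl
    obtain ⟨huS, huPL⟩ := mem_inter.mp hu
    obtain ⟨hvS, hvPR⟩ := mem_inter.mp hv
    have hvdm : v ∈ dm := mem_union_right _ (mem_filter.mpr ⟨hvPR, huPL⟩)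
    have hvnPL : v ∉ PL := disjoint_right.mp hPLR hvPR
    exact hSind v hvS hvdm (by rw [hσdef]; simpa [if_neg hvnPL] using huS)
  set M := ((S ∩ PL).image (fun u => ({u, fh u} : Finset V))) ∪
      ((S ∩ PR).image (fun v => ({gh v, v} : Finset V))) with hMdef
  have hdisj2 : ∀ a b c d : V, a ≠ c → a ≠ d → b ≠ c → b ≠ d →
      Disjoint ({a, b} : Finset V) ({c, d} : Finset V) := by
    intro a b c d h1 h2 h3 h4
    rw [disjoint_left]
    intro z hz hz'
    rcases mem_insert.mp hz with rfl | hz <;> rcases mem_insert.mp hz' with h | h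
    · exact h1 h
    · exact h2 (mem_singleton.mp h)
    · exact h3 ((mem_singleton.mp hz) ▸ h)
    · exact h4 ((mem_singleton.mp hz) ▸ (mem_singleton.mp h))
  refine ⟨M, ?_, ?_, ?_⟩
  · -- M ⊆ tightSubgraph
    intro e he
    rcases mem_union.mp he with h | h
    · obtain ⟨u, hu, rfl⟩ := mem_image.mp h
      exact hfhT u (mem_inter.mp hu).2
    · obtain ⟨v, hv, rfl⟩ := mem_image.mp h
      exact hghT v (mem_inter.mp hv).2
  · -- IsMatching
    intro e he e' he' hne
    rcases mem_union.mp he with h | h <;> rcases mem_union.mp he' with h' | h'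
    · obtain ⟨u, hu, rfl⟩ := mem_image.mp h
      obtain ⟨u', hu', rfl⟩ := mem_image.mp h'
      have huPL := (mem_inter.mp hu).2
      have hu'PL := (mem_inter.mp hu').2
      have huu : u ≠ u' := fun hc => hne (by rw [hc])
      exact hdisj2 _ _ _ _ huu
        (hne_LR u (hPLL huPL) (fh u') (hfhR u' hu'PL))
        (fun hc => hne_LR u' (hPLL hu'PL) (fh u) (hfhR u huPL) hc.symm)
        (fun hc => huu (hfhinj u huPL u' hu'PL hc))
    · obtain ⟨u, hu, rfl⟩ := mem_image.mp h
      obtain ⟨v, hv, rfl⟩ := mem_image.mp h'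
      have huPL := (mem_inter.mp hu).2
      have hvPR := (mem_inter.mp hv).2
      exact hdisj2 _ _ _ _
        (fun hc => hkey2 u hu v hv hc.symm)
        (hne_LR u (hPLL huPL) v (hPRR hvPR))
        (fun hc => hne_LR (gh v) (hghL v hvPR) (fh u) (hfhR u huPL) hc.symm)
        (hkey1 u hu v hv)
    · obtain ⟨v, hv, rfl⟩ := mem_image.mp h
      obtain ⟨u, hu, rfl⟩ := mem_image.mp h'
      have huPL := (mem_inter.mp hu).2
      have hvPR := (mem_inter.mp hv).2
      exact (hdisj2 _ _ _ _
        (fun hc => hkey2 u hu v hv hc.symm)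
        (hne_LR u (hPLL huPL) v (hPRR hvPR))
        (fun hc => hne_LR (gh v) (hghL v hvPR) (fh u) (hfhR u huPL) hc.symm)
        (hkey1 u hu v hv)).symm
    · obtain ⟨v, hv, rfl⟩ := mem_image.mp h
      obtain ⟨v', hv', rfl⟩ := mem_image.mp h'
      have hvPR := (mem_inter.mp hv).2
      have hv'PR := (mem_inter.mp hv').2
      have hvv : v ≠ v' := fun hc => hne (by rw [hc])
      exact hdisj2 _ _ _ _
        (fun hc => hvv (hghinj v hvPR v' hv'PR hc))
        (hne_LR (gh v) (hghL v hvPR) v' (hPRR hv'PR))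
        (fun hc => hne_LR (gh v') (hghL v' hv'PR) v (hPRR hvPR) hc.symm)
        hvv
  · -- covers all positive-potential vertices
    intro v hvVs hvpos
    have hvLR : v ∈ L ∨ v ∈ R := by
      obtain ⟨e, heG, hve⟩ := mem_biUnion.mp hvVs
      obtain ⟨a, haL, b, hbR, rfl⟩ := hbip e heG
      rcases mem_insert.mp hve with h | h
      · exact Or.inl (h ▸ haL)
      · exact Or.inr ((mem_singleton.mp h) ▸ hbR)
    rcases hvLR with hvL | hvR
    · have hvPL : v ∈ PL := mem_filter.mpr ⟨hvVs, hvL, hvpos⟩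
      by_cases hvS : v ∈ S
      · exact ⟨{v, fh v}, mem_union_left _ (mem_image_of_mem _ (mem_inter.mpr ⟨hvS, hvPL⟩)),
          mem_insert_self _ _⟩
      · obtain ⟨z, hzS, hzdm, hσz⟩ := hSdom v (mem_union_left _ hvPL) hvS
        rcases hdmcase z hzdm with ⟨hz1, hz2, hz3⟩ | ⟨hz1, hz2, hz3⟩
        · exact absurd hvPL (disjoint_right.mp hPLR (hσz ▸ hz3))
        · refine ⟨{gh z, z}, mem_union_right _ (mem_image_of_mem _ (mem_inter.mpr ⟨hzS, hz1⟩)), ?_⟩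
          rw [← hz2, hσz]
          exact mem_insert_self _ _
    · have hvPR : v ∈ PR := mem_filter.mpr ⟨hvVs, hvR, hvpos⟩
      by_cases hvS : v ∈ S
      · exact ⟨{gh v, v}, mem_union_right _ (mem_image_of_mem _ (mem_inter.mpr ⟨hvS, hvPR⟩)),
          mem_insert_of_mem (mem_singleton_self _)⟩
      · obtain ⟨z, hzS, hzdm, hσz⟩ := hSdom v (mem_union_right _ hvPR) hvS
        rcases hdmcase z hzdm with ⟨hz1, hz2, hz3⟩ | ⟨hz1, hz2, hz3⟩
        · refine ⟨{z, fh z}, mem_union_left _ (mem_image_of_mem _ (mem_inter.mpr ⟨hzS, hz1⟩)), ?_⟩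
          rw [← hz2, hσz]
          exact mem_insert_of_mem (mem_singleton_self _)
        · exact absurd hvPR (disjoint_left.mp hPLR (hσz ▸ hz3))
end

section
/- Let G be bipartite over L and R with weights w and suppose min-weight perfect matching on the completed graph G' (complete bipartite with parts extended to equal size) uses weights w' where w'(e) = w(e) for e ∈ G and w'(e) = W for e ∈ G' \ G, with W strictly greater than the sum of all |w(e)|. If G has a perfect matching, then every minimum-weight perfect matching M' of (G', w') satisfies M' ⊆ G, and M' is a minimum-weight perfect matching of (G, w). -/
/-!
A perfect matching that uses a penalty edge costs at least `W` on that edge, plus the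
weight of its edges in `G`. Any two edge sets inside `G` differ in weight by at most
`∑ e ∈ G, |w e|` (compare them on their symmetric difference), so this exceeds the weight
of the perfect matching that `G` is assumed to have. Hence a minimum of `(G', w')` lies in
`G`, where `w'` and `w` agree.
-/

open Finset

section

variable {α β : Type*} [DecidableEq α]

theorem sum_sub_sum_le_sum_abs [AddCommGroup β] [LinearOrder β] [IsOrderedAddMonoid β]
    {s t u : Finset α} (hs : s ⊆ u) (ht : t ⊆ u) (f : α → β) :
    ∑ x ∈ s, f x - ∑ x ∈ t, f x ≤ ∑ x ∈ u, |f x| := by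
  have hsymm : (s \ t) ∪ (t \ s) ⊆ u :=
    union_subset (sdiff_subset.trans hs) (sdiff_subset.trans ht)
  calc ∑ x ∈ s, f x - ∑ x ∈ t, f x = ∑ x ∈ s \ t, f x - ∑ x ∈ t \ s, f x :=
        sum_sdiff_sub_sum_sdiff.symm
    _ ≤ ∑ x ∈ s \ t, |f x| + ∑ x ∈ t \ s, |f x| := by
        rw [sub_eq_add_neg, ← sum_neg_distrib]
        exact add_le_add (sum_le_sum fun _ _ => le_abs_self _)
          (sum_le_sum fun _ _ => neg_le_abs _)
    _ = ∑ x ∈ (s \ t) ∪ (t \ s), |f x| := (sum_union disjoint_sdiff_sdiff).symm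
    _ ≤ ∑ x ∈ u, |f x| := sum_le_sum_of_subset_of_nonneg hsymm fun _ _ _ => abs_nonneg _

theorem sum_inter_add_le_sum_of_not_subset {G M : Finset α} {w w' : α → ℝ} {W : ℝ}
    (hW : 0 ≤ W) (hMG : ¬ M ⊆ G) (hw'G : ∀ e ∈ G, w' e = w e)
    (hw'pen : ∀ e ∈ M \ G, W ≤ w' e) :
    ∑ e ∈ M ∩ G, w e + W ≤ ∑ e ∈ M, w' e := by
  obtain ⟨e, he⟩ := sdiff_nonempty.mpr hMG
  have hinter : ∑ e ∈ M ∩ G, w' e = ∑ e ∈ M ∩ G, w e :=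
    sum_congr rfl fun e he => hw'G e (mem_inter.mp he).2
  have hpen : W ≤ ∑ e ∈ M \ G, w' e :=
    (hw'pen e he).trans (single_le_sum (fun e he => hW.trans (hw'pen e he)) he)
  rw [← sum_inter_add_sum_sdiff M G w', hinter]
  exact add_le_add le_rfl hpen

theorem sum_lt_sum_of_not_subset_of_penalty {G G' M N : Finset α} {w w' : α → ℝ} {W : ℝ}
    (hN : N ⊆ G) (hM : M ⊆ G') (hMG : ¬ M ⊆ G)
    (hw'G : ∀ e ∈ G, w' e = w e) (hw'pen : ∀ e ∈ G' \ G, w' e = W)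
    (hW : ∑ e ∈ G, |w e| < W) :
    ∑ e ∈ N, w' e < ∑ e ∈ M, w' e := by
  have hW₀ : 0 ≤ W := (sum_nonneg fun _ _ => abs_nonneg _).trans hW.le
  have hpen : ∀ e ∈ M \ G, W ≤ w' e := fun e he =>
    (hw'pen e (sdiff_subset_sdiff hM subset_rfl he)).ge
  calc ∑ e ∈ N, w' e = ∑ e ∈ N, w e := sum_congr rfl fun e he => hw'G e (hN he)
    _ < ∑ e ∈ M ∩ G, w e + W := by
        have := sum_sub_sum_le_sum_abs hN (inter_subset_right (s₁ := M)) w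
        linarith
    _ ≤ ∑ e ∈ M, w' e := sum_inter_add_le_sum_of_not_subset hW₀ hMG hw'G hpen

end

theorem penalty_reduction_correct_general
    {V : Type*} [DecidableEq V]
    (G G' : Finset (Finset V)) (hsub : G ⊆ G')
    (w w' : Finset V → ℝ) (W : ℝ)
    (hw'G : ∀ e ∈ G, w' e = w e)
    (hw'pen : ∀ e ∈ G' \ G, w' e = W)
    (hW : ∑ e ∈ G, |w e| < W)
    (hperf : ∃ M : Finset (Finset V), M ⊆ G ∧ IsMatching M ∧
      ∀ v ∈ G'.biUnion id, ∃ e ∈ M, v ∈ e) :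
    ∀ M' : Finset (Finset V),
      (M' ⊆ G' ∧ IsMatching M' ∧ (∀ v ∈ G'.biUnion id, ∃ e ∈ M', v ∈ e) ∧
        (∀ N : Finset (Finset V), N ⊆ G' → IsMatching N →
          (∀ v ∈ G'.biUnion id, ∃ e ∈ N, v ∈ e) → ∑ e ∈ M', w' e ≤ ∑ e ∈ N, w' e)) →
      (M' ⊆ G ∧
        ∀ N : Finset (Finset V), N ⊆ G → IsMatching N →
          (∀ v ∈ G'.biUnion id, ∃ e ∈ N, v ∈ e) → ∑ e ∈ M', w e ≤ ∑ e ∈ N, w e) := by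
  rintro M' ⟨hM'G', -, -, hM'min⟩
  obtain ⟨M, hMG, hMm, hMp⟩ := hperf
  have hM'G : M' ⊆ G := by
    by_contra hM'G
    exact (hM'min M (hMG.trans hsub) hMm hMp).not_gt
      (sum_lt_sum_of_not_subset_of_penalty hMG hM'G' hM'G hw'G hw'pen hW)
  refine ⟨hM'G, fun N hNG hNm hNp => ?_⟩
  calc ∑ e ∈ M', w e = ∑ e ∈ M', w' e := sum_congr rfl fun e he => (hw'G e (hM'G he)).symm
    _ ≤ ∑ e ∈ N, w' e := hM'min N (hNG.trans hsub) hNm hNp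
    _ = ∑ e ∈ N, w e := sum_congr rfl fun e he => hw'G e (hNG he)

/-- **Correctness of the penalty-based reduction.** If `G ⊆ G'` with `G'` complete
bipartite over equal-sized parts, `w'` agrees with `w` on `G` and assigns penalty
`W > Σ_{e∈G} |w(e)|` on `G' \ G`, and `G` has a perfect matching (of the whole vertex
set of `G'`), then every min-weight perfect matching `M'` of `(G', w')` uses only edges
of `G` and is a min-weight perfect matching of `(G, w)`. -/
theorem penalty_reduction_correct
    {V : Type*} [DecidableEq V]
    (G G' : Finset (Finset V)) (hG' : IsGraph G') (hsub : G ⊆ G')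
    (L' R' : Finset V) (hdisj : Disjoint L' R') (hcard : L'.card = R'.card)
    (hcomplete : ∀ e, e ∈ G' ↔ ∃ u ∈ L', ∃ v ∈ R', e = {u, v})
    (w w' : Finset V → ℝ) (W : ℝ)
    (hw'G : ∀ e ∈ G, w' e = w e)
    (hw'pen : ∀ e ∈ G' \ G, w' e = W)
    (hW : ∑ e ∈ G, |w e| < W)
    (hperf : ∃ M : Finset (Finset V), M ⊆ G ∧ IsMatching M ∧
      ∀ v ∈ G'.biUnion id, ∃ e ∈ M, v ∈ e) :
    ∀ M' : Finset (Finset V),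
      (M' ⊆ G' ∧ IsMatching M' ∧ (∀ v ∈ G'.biUnion id, ∃ e ∈ M', v ∈ e) ∧
        (∀ N : Finset (Finset V), N ⊆ G' → IsMatching N →
          (∀ v ∈ G'.biUnion id, ∃ e ∈ N, v ∈ e) → ∑ e ∈ M', w' e ≤ ∑ e ∈ N, w' e)) →
      (M' ⊆ G ∧
        ∀ N : Finset (Finset V), N ⊆ G → IsMatching N →
          (∀ v ∈ G'.biUnion id, ∃ e ∈ N, v ∈ e) → ∑ e ∈ M', w e ≤ ∑ e ∈ N, w e) :=
  penalty_reduction_correct_general G G' hsub w w' W hw'G hw'pen hW hperf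
end

section
/- If at each iteration of the Hungarian Method's main loop the invariants hold that M is a matching contained in the tight subgraph G_π and π is mp-feasible, and the path-search subroutine returns an M-augmenting path p contained in G_{π'} with M ⊆ G_{π'} for a new mp-feasible potential π', then after augmenting (M ← M ⊕ p, π ← π') the invariants hold again and |M ⊕ p| = |M| + 1. -/
open Finset

/-- mp-feasibility: `π(u) + π(v) ≤ w({u,v})` for every edge. -/
def MpFeasible {V : Type*} (G : Finset (Finset V)) (w : Finset V → ℝ) (π : V → ℝ) : Prop :=
  ∀ e ∈ G, ∑ v ∈ e, π v ≤ w e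

def pathEdges {V : Type*} [DecidableEq V] (vs : List V) : List (Finset V) :=
  List.zipWith (fun a b => ({a, b} : Finset V)) vs vs.tail

/-- `vs` is an `M`-augmenting path in `G`. -/
def IsAugPath {V : Type*} [DecidableEq V]
    (G M : Finset (Finset V)) (vs : List V) : Prop :=
  vs.Nodup ∧ (pathEdges vs) ≠ [] ∧
    (∀ e ∈ pathEdges vs, e ∈ G) ∧
    (∀ i (h : i < (pathEdges vs).length), (pathEdges vs).get ⟨i, h⟩ ∈ M ↔ i % 2 = 1) ∧
    (∀ u, vs.head? = some u ∨ vs.getLast? = some u → ∀ e ∈ M, u ∉ e)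

section Aux

private lemma hungarian_count_odd (m : ℕ) :
    ((Finset.range m).filter (fun i => i % 2 = 1)).card = m / 2 := by
  induction m with
  | zero => simp
  | succ k ih =>
    rw [Finset.range_add_one, Finset.filter_insert]
    split_ifs with h
    · rw [Finset.card_insert_of_notMem (by simp)]
      omega
    · omega

end Aux

/-- **Invariant preservation in the Hungarian Method's main loop.** If `M` is a matching
contained in `G_π`, `π` is mp-feasible, and the path search returns an mp-feasible `π'`
with `M ⊆ G_{π'}` and an `M`-augmenting path `p ⊆ G_{π'}`, then after the update
`M ← M ⊕ p`, `π ← π'` the invariants hold again and `|M ⊕ p| = |M| + 1`. -/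
theorem hungarian_invariant_preservation
    {V : Type*} [DecidableEq V]
    (G : Finset (Finset V)) (w : Finset V → ℝ) (π π' : V → ℝ)
    (M : Finset (Finset V))
    (hM : IsMatching M) (hMtight : M ⊆ tightSubgraph G w π)
    (hπ : MpFeasible G w π)
    (hπ' : MpFeasible G w π')
    (hMtight' : M ⊆ tightSubgraph G w π')
    (vs : List V) (hp : IsAugPath G M vs)
    (hptight : (pathEdges vs).toFinset ⊆ tightSubgraph G w π') :
    IsMatching ((M \ (pathEdges vs).toFinset) ∪ ((pathEdges vs).toFinset \ M)) ∧
      ((M \ (pathEdges vs).toFinset) ∪ ((pathEdges vs).toFinset \ M))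
        ⊆ tightSubgraph G w π' ∧
      MpFeasible G w π' ∧
      ((M \ (pathEdges vs).toFinset) ∪ ((pathEdges vs).toFinset \ M)).card
        = M.card + 1 := by
  classical
  obtain ⟨hnd, hne, hGE, halt, hend⟩ := hp
  set L := pathEdges vs with hLdef
  set P := L.toFinset with hPdef
  set n := L.length with hndef
  have hn1 : 0 < n := List.length_pos_iff.mpr hne
  have hvs : vs.length = n + 1 := by
    have hm : n = min vs.length vs.tail.length := by
      rw [hndef, hLdef, pathEdges, List.length_zipWith]
    rw [List.length_tail] at hm
    omega
  have hvne : vs ≠ [] := by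
    intro h; rw [h] at hvs; simp at hvs
  have hedge : ∀ i (h : i < n),
      L[i]'h = ({vs[i]'(by omega), vs[i+1]'(by omega)} : Finset V) := by
    intro i h
    have := List.getElem_zipWith (f := fun a b => ({a, b} : Finset V))
      (l := vs) (l' := vs.tail) (i := i) (h := h)
    rw [List.getElem_tail] at this
    exact this
  have hmem : ∀ i (h : i < n) (v : V),
      v ∈ L[i]'h ↔ v = vs[i]'(by omega) ∨ v = vs[i+1]'(by omega) := by
    intro i h v
    rw [hedge i h]
    simp
  have hinj : ∀ {a b : ℕ} (ha : a < vs.length) (hb : b < vs.length),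
      vs[a]'ha = vs[b]'hb → a = b := by
    intro a b ha hb hab
    exact hnd.getElem_inj_iff.mp hab
  have hgc : ∀ (a b : ℕ) (ha : a < vs.length) (hb : b < vs.length),
      a = b → vs[a]'ha = vs[b]'hb := by
    intro a b ha hb h; subst h; rfl
  have haltE : ∀ i (h : i < n), (L[i]'h ∈ M ↔ i % 2 = 1) := by
    intro i h
    simpa using halt i h
  have h0 : ∀ e ∈ M, vs[0]'(by omega) ∉ e := by
    intro e he
    apply hend _ (Or.inl ?_) e he
    rw [List.head?_eq_head hvne, List.head_eq_getElem]
  have hlastv : ∀ e ∈ M, vs[n]'(by omega) ∉ e := by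
    intro e he
    apply hend _ (Or.inr ?_) e he
    have h1 : vs.getLast? = some (vs.getLast hvne) := List.getLast?_eq_getLast hvne
    rw [List.getLast_eq_getElem] at h1
    rw [h1]
    congr 1
    exact hgc _ _ _ _ (by omega)
  have hodd : n % 2 = 1 := by
    by_contra hc
    have he : (n - 1) % 2 = 1 := by omega
    have hmem' : L[n-1]'(by omega) ∈ M := (haltE (n-1) (by omega)).mpr he
    have hv : vs[n]'(by omega) ∈ L[n-1]'(by omega) := by
      rw [hmem (n-1) (by omega)]
      exact Or.inr (hgc _ _ (by omega) (by omega) (by omega))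
    exact hlastv _ hmem' hv
  have hcov : ∀ k (hk : k < n + 1), 0 < k → k < n →
      ∃ m, ∃ (hm : m < n), m % 2 = 1 ∧ vs[k]'(by omega) ∈ L[m]'hm := by
    intro k hk hk0 hkn
    by_cases hpar : k % 2 = 1
    · exact ⟨k, hkn, hpar, (hmem k hkn _).mpr (Or.inl rfl)⟩
    · refine ⟨k - 1, by omega, by omega, (hmem (k-1) (by omega) _).mpr (Or.inr ?_)⟩
      exact hgc _ _ (by omega) (by omega) (by omega)
  have claimA : ∀ e ∈ M, e ∉ P → ∀ i (h : i < n) v, v ∈ e → v ∈ L[i]'h → False := by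
    intro e heM heP i h v hv hvL
    have hkex : ∃ k, ∃ (hk : k < n + 1), v = vs[k]'(by omega) := by
      rcases (hmem i h v).mp hvL with hvi | hvi
      · exact ⟨i, by omega, hvi⟩
      · exact ⟨i + 1, by omega, hvi⟩
    obtain ⟨k, hk, rfl⟩ := hkex
    by_cases hk0 : k = 0
    · subst hk0; exact h0 e heM hv
    by_cases hkn : k = n
    · subst hkn; exact hlastv e heM hv
    obtain ⟨m, hm, hmodd, hvm⟩ := hcov k hk (by omega) (by omega)
    have hLmM : L[m]'hm ∈ M := (haltE m hm).mpr hmodd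
    have hLmP : L[m]'hm ∈ P := List.mem_toFinset.mpr (List.getElem_mem hm)
    have hne' : e ≠ L[m]'hm := by rintro rfl; exact heP hLmP
    exact (Finset.disjoint_left.mp (hM e heM _ hLmM hne')) hv hvm
  have claimB : ∀ i j (hi : i < n) (hj : j < n), i % 2 = 0 → j % 2 = 0 → i ≠ j →
      Disjoint (L[i]'hi) (L[j]'hj) := by
    intro i j hi hj hie hje hij
    rw [Finset.disjoint_left]
    intro v hvi hvj
    rcases (hmem i hi v).mp hvi with h1 | h1 <;> rcases (hmem j hj v).mp hvj with h2 | h2 <;>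
      · have := hinj _ _ (h1.symm.trans h2); omega
  have hedgeinj : ∀ i j (hi : i < n) (hj : j < n), L[i]'hi = L[j]'hj → i = j := by
    intro i j hi hj hij
    have h1 : vs[i]'(by omega) ∈ L[j]'hj := hij ▸ (hmem i hi _).mpr (Or.inl rfl)
    have h2 : vs[i+1]'(by omega) ∈ L[j]'hj := hij ▸ (hmem i hi _).mpr (Or.inr rfl)
    rcases (hmem j hj _).mp h1 with h1' | h1' <;> rcases (hmem j hj _).mp h2 with h2' | h2' <;>
      · have := hinj _ _ h1'
        have := hinj _ _ h2'
        omega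
  have hndL : L.Nodup := by
    rw [List.nodup_iff_injective_get]
    intro a b hab
    apply Fin.ext
    exact hedgeinj a b a.isLt b.isLt (by simpa using hab)
  refine ⟨?_, ?_, hπ', ?_⟩
  · -- matching
    have key : ∀ e, e ∈ M \ P → ∀ f, f ∈ P \ M → Disjoint e f := by
      intro e he f hf
      rw [Finset.mem_sdiff] at he hf
      obtain ⟨hfP, _⟩ := hf
      rw [hPdef, List.mem_toFinset, List.mem_iff_getElem] at hfP
      obtain ⟨i, hi, rfl⟩ := hfP
      rw [Finset.disjoint_left]
      intro v hv hvf
      exact claimA e he.1 he.2 i hi v hv hvf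
    intro e he f hf hef
    rw [Finset.mem_union] at he hf
    rcases he with he | he <;> rcases hf with hf | hf
    · exact hM e (Finset.mem_sdiff.mp he).1 f (Finset.mem_sdiff.mp hf).1 hef
    · exact key e he f hf
    · exact (key f hf e he).symm
    · rw [Finset.mem_sdiff, hPdef, List.mem_toFinset, List.mem_iff_getElem] at he hf
      obtain ⟨⟨i, hi, rfl⟩, heM⟩ := he
      obtain ⟨⟨j, hj, rfl⟩, hfM⟩ := hf
      have hpi : ¬ i % 2 = 1 := fun h => heM ((haltE i hi).mpr h)
      have hpj : ¬ j % 2 = 1 := fun h => hfM ((haltE j hj).mpr h)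
      exact claimB i j hi hj (by omega) (by omega) (fun h => hef (by subst h; rfl))
  · -- tightness
    intro e he
    rw [Finset.mem_union] at he
    rcases he with he | he
    · exact hMtight' (Finset.mem_sdiff.mp he).1
    · exact hptight (Finset.mem_sdiff.mp he).1
  · -- cardinality
    have hMP : ((Finset.range n).filter (fun i => i % 2 = 1)).card = (M ∩ P).card := by
      apply Finset.card_bij (fun a _ => L.getD a ∅)
      · intro a ha
        simp only [Finset.mem_filter, Finset.mem_range] at ha
        rw [List.getD_eq_getElem L ∅ ha.1]
        exact Finset.mem_inter.mpr ⟨(haltE a ha.1).mpr ha.2,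
          List.mem_toFinset.mpr (List.getElem_mem ha.1)⟩
      · intro a ha b hb hab
        simp only [Finset.mem_filter, Finset.mem_range] at ha hb
        rw [List.getD_eq_getElem L ∅ ha.1, List.getD_eq_getElem L ∅ hb.1] at hab
        exact hedgeinj a b ha.1 hb.1 hab
      · intro e he
        rw [Finset.mem_inter, hPdef, List.mem_toFinset, List.mem_iff_getElem] at he
        obtain ⟨heM, i, hi, rfl⟩ := he
        refine ⟨i, ?_, List.getD_eq_getElem L ∅ hi⟩
        simp only [Finset.mem_filter, Finset.mem_range]
        exact ⟨hi, (haltE i hi).mp heM⟩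
    have hPcard : P.card = n := by rw [hPdef]; exact List.toFinset_card_of_nodup hndL
    have h1 : (M \ P).card + (M ∩ P).card = M.card := Finset.card_sdiff_add_card_inter M P
    have h2 : (P \ M).card + (P ∩ M).card = P.card := Finset.card_sdiff_add_card_inter P M
    rw [Finset.inter_comm P M] at h2
    rw [Finset.card_union_of_disjoint disjoint_sdiff_sdiff]
    rw [hungarian_count_odd n] at hMP
    omega
end

section
/- Let g(y) = e^{y−1} and F = 1 − 1/e. Then for all y ∈ [0,1], g is monotone with values in [0,1], and for every θ ∈ [0,1]: ∫_0^θ g(y) dy + (1 − g(θ)) ≥ F. -/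
/-! The integral telescopes, `∫₀^θ e^{y-1} dy = e^{θ-1} - e^{-1}`, so the right-hand side equals
`1 - 1/e` for every `θ`: the inequality is an equality. -/

open Real

theorem integral_exp_sub (a b c : ℝ) :
    ∫ y in a..b, exp (y - c) = exp (b - c) - exp (a - c) := by
  rw [intervalIntegral.integral_comp_sub_right (fun y => exp y), integral_exp]

theorem monotone_exp_sub (c : ℝ) : Monotone fun y : ℝ => exp (y - c) :=
  fun _ _ h => exp_le_exp.2 (sub_le_sub_right h c)

theorem exp_sub_one_mem_Icc {y : ℝ} (hy : y ≤ 1) : exp (y - 1) ∈ Set.Icc (0 : ℝ) 1 :=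
  ⟨(exp_pos _).le, exp_le_one_iff.2 (sub_nonpos.2 hy)⟩

theorem integral_exp_sub_one_add_one_sub (θ : ℝ) :
    (∫ y in (0 : ℝ)..θ, exp (y - 1)) + (1 - exp (θ - 1)) = 1 - (exp 1)⁻¹ := by
  rw [integral_exp_sub, zero_sub, exp_neg]
  ring

/-- **Key analytic inequality for RANKING.** With `g(y) = e^{y−1}` and `F = 1 − 1/e`,
`g` is monotone on `[0,1]` with values in `[0,1]`, and for every `θ ∈ [0,1]`,
`∫_0^θ g(y) dy + (1 − g(θ)) ≥ F`. -/
theorem ranking_dual_feasibility_inequality :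
    MonotoneOn (fun y : ℝ => Real.exp (y - 1)) (Set.Icc 0 1) ∧
    (∀ y ∈ Set.Icc (0:ℝ) 1, Real.exp (y - 1) ∈ Set.Icc (0:ℝ) 1) ∧
    ∀ θ ∈ Set.Icc (0:ℝ) 1,
      1 - (Real.exp 1)⁻¹ ≤
        (∫ y in (0:ℝ)..θ, Real.exp (y - 1)) + (1 - Real.exp (θ - 1)) :=
  ⟨(monotone_exp_sub 1).monotoneOn _,
    fun _ hy => exp_sub_one_mem_Icc hy.2,
    fun θ _ => (integral_exp_sub_one_add_one_sub θ).ge⟩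
end
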